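/- For every integer k ≥ 1, every path in the graph B_k from x_0 to x_k has length at least k. -/

import Mathlib

/-- Generating relation for the edges of `B k` on vertex set `Fin (2k+1)`: the cycle
`x₀ x₁ … x_{2k} x₀` together with the chords `xᵢ x_{2k-i}` for `1 ≤ i ≤ k-1`. -/
def BRel (k : ℕ) (i j : Fin (2*k+1)) : Prop :=
  (j : ℕ) = ((i : ℕ) + 1) % (2*k+1) ∨
    (1 ≤ (i : ℕ) ∧ (i : ℕ) ≤ k - 1 ∧ (j : ℕ) = 2*k - (i : ℕ))

/-- The graph `B k`. -/
def B (k : ℕ) : SimpleGraph (Fin (2*k+1)) := SimpleGraph.fromRel (BRel k)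

def fB (k : ℕ) (v : Fin (2*k+1)) : ℤ := min (v : ℤ) (2*k+1 - (v : ℤ))

lemma fB_brel (k : ℕ) {u v : Fin (2*k+1)} (h : BRel k u v) :
    |fB k u - fB k v| ≤ 1 := by
  have hu := u.isLt
  have hv := v.isLt
  have hu' : ((u : ℕ) : ℤ) = (u : ℤ) := rfl
  rcases h with h | ⟨h1, h2, h3⟩
  · have h' : (v : ℕ) = (u : ℕ) + 1 ∨ ((u : ℕ) = 2*k ∧ (v : ℕ) = 0) := by
      rcases Nat.lt_or_ge ((u:ℕ)+1) (2*k+1) with hc | hc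
      · left; rw [h, Nat.mod_eq_of_lt hc]
      · right
        have hu2 : (u : ℕ) = 2*k := by omega
        refine ⟨hu2, ?_⟩
        rw [h, hu2]
        simp [Nat.mod_self]
    have h'' : (v : ℤ) = (u : ℤ) + 1 ∨ ((u : ℤ) = 2*k ∧ (v : ℤ) = 0) := by
      rcases h' with h' | ⟨h1,h2⟩
      · left; exact_mod_cast congrArg (Nat.cast : ℕ → ℤ) h'
      · right; constructor <;> omega
    simp only [fB, min_def, abs_le]
    constructor <;> split <;> split <;> omega
  · have h3' : (v : ℤ) = 2*k - (u : ℤ) := by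
      have := congrArg (Nat.cast : ℕ → ℤ) h3
      push_cast [Nat.cast_sub (by omega : (u:ℕ) ≤ 2*k)] at this
      exact this
    simp only [fB, min_def, abs_le]
    constructor <;> split <;> split <;> omega

lemma fB_adj (k : ℕ) {u v : Fin (2*k+1)} (h : (B k).Adj u v) :
    |fB k u - fB k v| ≤ 1 := by
  rw [B, SimpleGraph.fromRel_adj] at h
  rcases h.2 with h | h
  · exact fB_brel k h
  · rw [abs_sub_comm]; exact fB_brel k h

lemma fB_walk (k : ℕ) : ∀ {u v : Fin (2*k+1)} (p : (B k).Walk u v),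
    |fB k u - fB k v| ≤ (p.length : ℤ) := by
  intro u v p
  induction p with
  | nil => simp
  | cons h p ih =>
    calc |fB k _ - fB k _| ≤ |fB k _ - fB k _| + |fB k _ - fB k _| :=
          abs_sub_le _ _ _
      _ ≤ 1 + _ := add_le_add (fB_adj k h) ih
      _ = _ := by push_cast [SimpleGraph.Walk.length_cons]; ring

/-- For every integer `k ≥ 1`, every path in `B k` from `x₀` to `x_k` has length at
least `k`. -/
theorem stmt_6 (k : ℕ) (hk : 1 ≤ k) :
    ∀ p : (B k).Walk ⟨0, by omega⟩ ⟨k, by omega⟩, p.IsPath → k ≤ p.length := by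
  intro p _
  have h := fB_walk k p
  have h0 : fB k ⟨0, by omega⟩ = 0 := by simp [fB]; omega
  have hk' : fB k ⟨k, by omega⟩ = k := by simp [fB]; omega
  rw [h0, hk'] at h
  simp only [zero_sub, abs_neg, abs_of_nonneg (by positivity : (0:ℤ) ≤ (k:ℤ))] at h
  exact_mod_cast h
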